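/- If u ≤ w in the composition poset ℙ*, then there exists a unique embedding ρ of u into w (the rightmost embedding) with the property that for every embedding η of u into w, Supp η ≤ Supp ρ, where for sets S = {i_1 < … < i_m} and S' = {i'_1 < … < i'_m} of equal size, S ≤ S' means i_j ≤ i'_j for all 1 ≤ j ≤ m. -/

import Mathlib

/-!
The composition poset ℙ* and its Möbius function (Sagan–Vatter, Theorem 2
"mobius-main").
-/

/-- The underlying word of a composition, as a list of natural numbers. -/
def coes (w : List ℕ+) : List ℕ := w.map (fun x => (x : ℕ))

/-- The order on the composition poset ℙ*: `u ≤ w` iff `w` has a subsequence of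
length `|u|` dominating `u` entrywise. -/
def CompLE (u w : List ℕ+) : Prop := List.SublistForall₂ (· ≤ ·) u w

/-- `η` is an embedding of the composition `u` into the word `W` over ℕ:
it has length `|W|`, its nonzero entries read left to right form `u`, and
`η(i) ≤ W(i)` for all `i`. -/
def IsEmb (u : List ℕ+) (W η : List ℕ) : Prop :=
  η.length = W.length ∧
  η.filter (fun x => decide (x ≠ 0)) = coes u ∧
  ∀ i, η.getD i 0 ≤ W.getD i 0

/-- The support of an embedding `η`, as the increasing list of indices `i`
with `η(i) ≠ 0`. -/
def suppList (η : List ℕ) : List ℕ :=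
  (List.range η.length).filter (fun i => decide (η.getD i 0 ≠ 0))

open Classical in
noncomputable def rho : List ℕ+ → List ℕ+ → List ℕ
  | _, [] => []
  | [], _ :: w => 0 :: rho [] w
  | a :: u', b :: w' =>
      if CompLE (a :: u') w' then 0 :: rho (a :: u') w' else (a : ℕ) :: rho u' w'

lemma compLE_nil (u : List ℕ+) (h : CompLE u []) : u = [] := by
  cases h; rfl

lemma CompLE.tail {a : ℕ+} {u w : List ℕ+} (h : CompLE (a :: u) w) : CompLE u w := by
  induction w with
  | nil => cases h
  | cons b w ih =>
    cases h with
    | cons hab h' => exact List.SublistForall₂.cons_right h'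
    | cons_right h' => exact List.SublistForall₂.cons_right (ih h')

lemma compLE_cons_cases {a b : ℕ+} {u w : List ℕ+} (h : CompLE (a :: u) (b :: w)) :
    (a ≤ b ∧ CompLE u w) ∨ CompLE (a :: u) w := by
  cases h with
  | cons hab h' => exact Or.inl ⟨hab, h'⟩
  | cons_right h' => exact Or.inr h'

lemma supp_cons (x : ℕ) (t : List ℕ) :
    suppList (x :: t) = (if x = 0 then [] else [0]) ++ (suppList t).map (· + 1) := by
  simp only [suppList, List.length_cons, List.range_succ_eq_map, List.filter_cons,
    List.getD_cons_zero, List.filter_map]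
  by_cases hx : x = 0 <;> simp [hx, Function.comp_def, Nat.succ_eq_add_one]

lemma coes_length (v : List ℕ+) : (coes v).length = v.length := by
  induction v with
  | nil => rfl
  | cons a v ih => simpa [coes] using ih

lemma coes_cons (a : ℕ+) (u : List ℕ+) : coes (a :: u) = (a : ℕ) :: coes u := rfl

lemma isEmb_nil_right {u : List ℕ+} {W η : List ℕ} (h : IsEmb u W η) (hW : W = []) :
    u = [] ∧ η = [] := by
  obtain ⟨h1, h2, _⟩ := h
  subst hW
  have : η = [] := List.length_eq_zero_iff.mp h1
  subst this
  simp only [List.filter_nil] at h2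
  constructor
  · cases u with
    | nil => rfl
    | cons a u => simp [coes] at h2
  · rfl

lemma isEmb_cons_zero {u : List ℕ+} {b : ℕ} {W η' : List ℕ}
    (h : IsEmb u (b :: W) (0 :: η')) : IsEmb u W η' := by
  obtain ⟨h1, h2, h3⟩ := h
  refine ⟨by simpa using h1, by simpa using h2, fun i => ?_⟩
  have := h3 (i + 1); simpa using this

lemma isEmb_cons_pos {u : List ℕ+} {b x : ℕ} {W η' : List ℕ} (hx : x ≠ 0)
    (h : IsEmb u (b :: W) (x :: η')) :
    ∃ a u', u = a :: u' ∧ (a : ℕ) = x ∧ x ≤ b ∧ IsEmb u' W η' := by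
  obtain ⟨h1, h2, h3⟩ := h
  rw [List.filter_cons_of_pos (by simpa using hx)] at h2
  cases u with
  | nil => simp [coes] at h2
  | cons a u' =>
    rw [coes_cons] at h2
    refine ⟨a, u', rfl, (List.cons.injEq _ _ _ _ ▸ h2).1.symm, by simpa using h3 0,
      by simpa using h1, (List.cons.injEq _ _ _ _ ▸ h2).2, fun i => by simpa using h3 (i+1)⟩

lemma isEmb_compLE : ∀ (w u : List ℕ+) (η : List ℕ), IsEmb u (coes w) η → CompLE u w := by
  intro w
  induction w with
  | nil =>
    intro u η h
    obtain ⟨hu, -⟩ := isEmb_nil_right h rfl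
    subst hu; exact List.SublistForall₂.nil
  | cons b w ih =>
    intro u η h
    cases η with
    | nil => exact absurd h.1 (by simp [coes])
    | cons x η' =>
      by_cases hx : x = 0
      · subst hx
        exact List.SublistForall₂.cons_right (ih _ _ (isEmb_cons_zero h))
      · obtain ⟨a, u', rfl, hax, hxb, h'⟩ := isEmb_cons_pos hx h
        exact List.SublistForall₂.cons (by rw [← PNat.coe_le_coe, hax]; exact hxb) (ih _ _ h')

lemma rho_emb : ∀ (w u : List ℕ+), CompLE u w → IsEmb u (coes w) (rho u w) := by
  intro w
  induction w with
  | nil =>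
    intro u h
    obtain rfl := compLE_nil u h
    exact ⟨rfl, rfl, fun i => by simp [show rho ([]:List ℕ+) [] = [] from rfl, coes]⟩
  | cons b w ih =>
    intro u h
    cases u with
    | nil =>
      have h' := ih [] List.SublistForall₂.nil
      rw [show rho [] (b :: w) = 0 :: rho [] w from rfl]
      exact ⟨by simpa [coes] using h'.1, by simpa using h'.2.1,
        fun i => by cases i with
          | zero => simp [coes]
          | succ i => simpa [coes] using h'.2.2 i⟩
    | cons a u' =>
      by_cases hc : CompLE (a :: u') w
      · rw [show rho (a :: u') (b :: w) = 0 :: rho (a :: u') w from if_pos hc]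
        have h' := ih _ hc
        exact ⟨by simpa [coes] using h'.1, by simpa using h'.2.1,
          fun i => by cases i with
            | zero => simp [coes]
            | succ i => simpa [coes] using h'.2.2 i⟩
      · rw [show rho (a :: u') (b :: w) = (a : ℕ) :: rho u' w from if_neg hc]
        obtain ⟨hab, hc'⟩ := (compLE_cons_cases h).resolve_right hc
        have h' := ih _ hc'
        refine ⟨by simpa [coes] using h'.1, ?_, fun i => ?_⟩
        · rw [List.filter_cons_of_pos (by simp [a.ne_zero])]
          rw [coes_cons, h'.2.1]
        · cases i with
          | zero => simpa [coes] using hab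
          | succ i => simpa [coes] using h'.2.2 i

lemma forall2_map_succ {l₁ l₂ : List ℕ} (h : List.Forall₂ (· ≤ ·) l₁ l₂) :
    List.Forall₂ (· ≤ ·) (l₁.map (· + 1)) (l₂.map (· + 1)) := by
  induction h with
  | nil => exact List.Forall₂.nil
  | cons h _ ih => exact List.Forall₂.cons (by simpa using Nat.add_le_add_right h 1) ih

lemma rho_cons_skip (v : List ℕ+) (b : ℕ+) (w : List ℕ+) (h : CompLE v w) :
    rho v (b :: w) = 0 :: rho v w := by
  cases v with
  | nil => rfl
  | cons a u' => exact if_pos h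

lemma supp_eq_nil {η : List ℕ} (h : η.filter (fun x => decide (x ≠ 0)) = []) :
    suppList η = [] := by
  induction η with
  | nil => rfl
  | cons x t ih =>
    by_cases hx : x = 0
    · have h' : t.filter (fun x => decide (x ≠ 0)) = [] := by
        simpa [List.filter_cons, hx] using h
      rw [supp_cons, ih h']
      simp [hx]
    · simp [List.filter_cons, hx] at h

lemma supp_len (η : List ℕ) :
    (suppList η).length = (η.filter (fun x => decide (x ≠ 0))).length := by
  induction η with
  | nil => rfl
  | cons x t ih =>
    rw [supp_cons, List.filter_cons]
    by_cases hx : x = 0 <;> simp [hx, ih]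

lemma supp_rho_tail : ∀ (w : List ℕ+) (a : ℕ+) (u : List ℕ+), CompLE (a :: u) w →
    (suppList (rho (a :: u) w)).tail = suppList (rho u w) := by
  intro w
  induction w with
  | nil => intro a u h; cases h
  | cons b w ih =>
    intro a u h
    by_cases hc : CompLE (a :: u) w
    · rw [show rho (a :: u) (b :: w) = 0 :: rho (a :: u) w from if_pos hc, supp_cons,
        rho_cons_skip u b w hc.tail, supp_cons]
      simp only [if_true, reduceIte, List.nil_append]
      rw [← List.map_tail, ih a u hc]
    · rw [show rho (a :: u) (b :: w) = (a : ℕ) :: rho u w from if_neg hc, supp_cons]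
      obtain ⟨hab, hc'⟩ := (compLE_cons_cases h).resolve_right hc
      rw [rho_cons_skip u b w hc', supp_cons]
      simp [a.ne_zero]

lemma rho_max : ∀ (w u : List ℕ+) (η : List ℕ), IsEmb u (coes w) η →
    List.Forall₂ (· ≤ ·) (suppList η) (suppList (rho u w)) := by
  intro w
  induction w with
  | nil =>
    intro u η h
    obtain ⟨-, rfl⟩ := isEmb_nil_right h rfl
    have hr : rho u [] = [] := by cases u <;> rfl
    rw [hr]
    exact List.Forall₂.nil
  | cons b w ih =>
    intro u η h
    cases η with
    | nil => exact absurd h.1 (by simp [coes])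
    | cons x η' =>
      cases u with
      | nil =>
        rw [supp_eq_nil h.2.1, supp_eq_nil (rho_emb (b :: w) [] List.SublistForall₂.nil).2.1]
        exact List.Forall₂.nil
      | cons a u' =>
        by_cases hx : x = 0
        · subst hx
          have h' : IsEmb (a :: u') (coes w) η' := isEmb_cons_zero h
          have hc : CompLE (a :: u') w := isEmb_compLE _ _ _ h'
          rw [rho_cons_skip _ b w hc, supp_cons, supp_cons]
          simp only [if_pos rfl, List.nil_append]
          exact forall2_map_succ (ih _ _ h')
        · obtain ⟨a', u'', heq, hax, hxb, h'⟩ := isEmb_cons_pos hx h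
          injection heq with h1 h2
          subst h1; subst h2
          rw [supp_cons, if_neg hx, List.singleton_append]
          by_cases hc : CompLE (a :: u') w
          · rw [show rho (a :: u') (b :: w) = 0 :: rho (a :: u') w from if_pos hc, supp_cons]
            simp only [if_pos rfl, List.nil_append]
            -- suppList (rho (a::u') w) is nonempty
            have hlen : (suppList (rho (a :: u') w)).length = u'.length + 1 := by
              rw [supp_len, (rho_emb w _ hc).2.1, coes_length, List.length_cons]
            obtain ⟨s, S, hS⟩ : ∃ s S, suppList (rho (a :: u') w) = s :: S := by
              cases hSS : suppList (rho (a :: u') w) with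
              | nil => rw [hSS] at hlen; simp at hlen
              | cons s S => exact ⟨s, S, rfl⟩
            rw [hS, List.map_cons]
            refine List.Forall₂.cons (Nat.zero_le _) (forall2_map_succ ?_)
            have ht := supp_rho_tail w a u' hc
            rw [hS] at ht
            rw [show S = (s :: S).tail from rfl, ht]
            exact ih _ _ h'
          · rw [show rho (a :: u') (b :: w) = (a : ℕ) :: rho u' w from if_neg hc, supp_cons]
            simp only [PNat.ne_zero a, ite_false, List.singleton_append]
            exact List.Forall₂.cons le_rfl (forall2_map_succ (ih _ _ h'))

lemma forall2_le_antisymm : ∀ {l₁ l₂ : List ℕ},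
    List.Forall₂ (· ≤ ·) l₁ l₂ → List.Forall₂ (· ≤ ·) l₂ l₁ → l₁ = l₂ := by
  intro l₁
  induction l₁ with
  | nil => intro l₂ h _; cases h; rfl
  | cons x t ih =>
    intro l₂ h h'
    cases h with
    | cons hxy h2 =>
      cases h' with
      | cons hyx h3 =>
        rw [Nat.le_antisymm hxy hyx, ih h2 h3]

lemma emb_ext : ∀ (η₁ η₂ : List ℕ), η₁.length = η₂.length →
    η₁.filter (fun x => decide (x ≠ 0)) = η₂.filter (fun x => decide (x ≠ 0)) →
    suppList η₁ = suppList η₂ → η₁ = η₂ := by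
  intro η₁
  induction η₁ with
  | nil =>
    intro η₂ hl _ _
    exact (List.length_eq_zero_iff.mp hl.symm).symm
  | cons x t ih =>
    intro η₂ hl hf hs
    cases η₂ with
    | nil => simp at hl
    | cons y s =>
      rw [supp_cons, supp_cons] at hs
      by_cases hx : x = 0 <;> by_cases hy : y = 0
      · subst hx; subst hy
        simp only [if_pos rfl, List.nil_append] at hs
        have hts : suppList t = suppList s :=
          List.map_injective_iff.mpr (fun a b hab => by omega) hs
        rw [ih s (by simpa using hl) (by simpa [List.filter_cons] using hf) hts]
      · subst hx
        simp only [if_true, reduceIte, if_neg hy, List.nil_append, List.singleton_append] at hs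
        have : (0 : ℕ) ∈ List.map (· + 1) (suppList t) := by rw [hs]; exact List.mem_cons_self
        simp at this
      · subst hy
        simp only [if_true, reduceIte, if_neg hx, List.nil_append, List.singleton_append] at hs
        have : (0 : ℕ) ∈ List.map (· + 1) (suppList s) := by rw [← hs]; exact List.mem_cons_self
        simp at this
      · simp only [if_neg hx, if_neg hy, List.singleton_append] at hs
        have hmap : List.map (· + 1) (suppList t) = List.map (· + 1) (suppList s) := by
          injection hs
        have hts : suppList t = suppList s :=
          List.map_injective_iff.mpr (fun a b hab => by simpa using hab) hmap
        rw [List.filter_cons_of_pos (by simpa using hx), List.filter_cons_of_pos (by simpa using hy)] at hf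
        obtain ⟨hxy, hf'⟩ := List.cons.injEq _ _ _ _ ▸ hf
        rw [hxy, ih s (by simpa using hl) hf' hts]

/-- If `u ≤ w` in ℙ*, there is a unique embedding `ρ` of `u` into `w` (the
rightmost embedding) such that every embedding `η` of `u` into `w` satisfies
`Supp η ≤ Supp ρ`, where supports (sets of equal size `|u|`, listed
increasingly) are compared elementwise. -/
theorem exists_unique_rightmost_embedding (u w : List ℕ+) (h : CompLE u w) :
    ∃! ρ : List ℕ, IsEmb u (coes w) ρ ∧
      ∀ η : List ℕ, IsEmb u (coes w) η →
        List.Forall₂ (· ≤ ·) (suppList η) (suppList ρ) := by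
  refine ⟨rho u w, ⟨rho_emb w u h, fun η hη => rho_max w u η hη⟩, ?_⟩
  rintro y ⟨hy, hmax⟩
  have h1 := hmax (rho u w) (rho_emb w u h)
  have h2 := rho_max w u y hy
  have hs : suppList y = suppList (rho u w) := forall2_le_antisymm h2 h1
  exact emb_ext _ _ (hy.1.trans (rho_emb w u h).1.symm)
    (hy.2.1.trans (rho_emb w u h).2.1.symm) hs
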